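/- arXiv:1703.06416 — 3 statements merged into one kernel-verified Lean document; each statement's English description precedes it below -/
import Mathlib

section
/- Passivity of the dual ascent subsystem (differential inequality form): let U(λ,ν) = (1/2)(‖λ-λ*‖² + ‖ν-ν*‖²) and suppose λ evolves by λ̇_j = η_j(λ_j, g_j(z̃)) (switch rule) and ν̇ = h(z̃), with g convex differentiable componentwise, h affine, λ(t) ≥ 0 for all t, and (z*, λ*, ν*) satisfying the KKT conditions (λ* ≥ 0, g(z*) ≤ 0, h(z*) = 0, λ*_j g_j(z*) = 0). Then at every time, dU/dt ≤ (∇g(z̃)ᵀλ - ∇g(z*)ᵀλ* + ∇h(z̃)ᵀν - ∇h(z*)ᵀν*)ᵀ (z̃ - z*). -/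
/-!
The inequality splits over the constraints. For an inequality constraint, the first-order
characterization of convexity at `z̃` and at `z*` gives `λⱼ gⱼ(z̃) ≤ λⱼ ⟪∇gⱼ(z̃), z̃ - z*⟫`
(as `gⱼ(z*) ≤ 0`) and `λ*ⱼ ⟪∇gⱼ(z*), z̃ - z*⟫ ≤ λ*ⱼ gⱼ(z̃)` (by complementary slackness).
The switch rule only replaces `gⱼ(z̃) < 0` by `0` when `λⱼ = 0`, where the factor `λⱼ - λ*ⱼ`
is `≤ 0`, so it can only lower the left-hand side. For an affine equality constraint,
`h(z*) = 0` makes `hₗ(z̃) = ⟪aₗ, z̃ - z*⟫` exactly.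
-/

open scoped RealInnerProductSpace BigOperators

open Classical in
/-- The switch rule: `η(λⱼ,c) = 0` if `λⱼ = 0` and `c < 0`, else `c`. -/
noncomputable def eta (lam c : ℝ) : ℝ := if lam = 0 ∧ c < 0 then 0 else c

theorem ConvexOn.add_fderiv_sub_le {E : Type*} [NormedAddCommGroup E] [NormedSpace ℝ E]
    {s : Set E} {f : E → ℝ} {f' : E →L[ℝ] ℝ} {x y : E}
    (hf : ConvexOn ℝ s f) (hx : x ∈ s) (hy : y ∈ s) (hf' : HasFDerivAt f f' x) :
    f x + f' (y - x) ≤ f y := by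
  have hline : HasDerivAt (f ∘ AffineMap.lineMap (k := ℝ) x y) (f' (y - x)) (0 : ℝ) := by
    refine hf'.comp_hasDerivAt_of_eq 0 AffineMap.hasDerivAt_lineMap ?_
    simp
  have hslope := (hf.comp_affineMap (AffineMap.lineMap x y)).le_slope_of_hasDerivAt
    (x := 0) (y := 1) (by simpa) (by simpa) zero_lt_one hline
  simp only [slope_def_field, Function.comp_apply, AffineMap.lineMap_apply_zero,
    AffineMap.lineMap_apply_one, sub_zero, div_one] at hslope
  linarith

theorem ConvexOn.add_inner_gradient_sub_le {E : Type*} [NormedAddCommGroup E]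
    [InnerProductSpace ℝ E] [CompleteSpace E] {s : Set E} {f : E → ℝ} {f' x y : E}
    (hf : ConvexOn ℝ s f) (hx : x ∈ s) (hy : y ∈ s) (hf' : HasGradientAt f f' x) :
    f x + ⟪f', y - x⟫ ≤ f y :=
  hf.add_fderiv_sub_le hx hy (hasGradientAt_iff_hasFDerivAt.mp hf')

theorem sub_mul_eta_le {lam lam' c : ℝ} (hlam' : 0 ≤ lam') :
    (lam - lam') * eta lam c ≤ (lam - lam') * c := by
  unfold eta
  split_ifs with hswitch
  · obtain ⟨rfl, hc⟩ := hswitch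
    nlinarith
  · rfl

section KKT

variable {E : Type*} [NormedAddCommGroup E] [InnerProductSpace ℝ E]

theorem sub_mul_eta_le_inner_gradient [CompleteSpace E] {s : Set E} {f : E → ℝ}
    {Gs Gt zs zt : E} {lam lams : ℝ} (hf : ConvexOn ℝ s f) (hzs : zs ∈ s) (hzt : zt ∈ s)
    (hGs : HasGradientAt f Gs zs) (hGt : HasGradientAt f Gt zt)
    (hlam : 0 ≤ lam) (hlams : 0 ≤ lams) (hfeas : f zs ≤ 0) (hslack : lams * f zs = 0) :
    (lam - lams) * eta lam (f zt) ≤ ⟪lam • Gt, zt - zs⟫ - ⟪lams • Gs, zt - zs⟫ := by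
  have htangent_t := hf.add_inner_gradient_sub_le hzt hzs hGt
  have htangent_s := hf.add_inner_gradient_sub_le hzs hzt hGs
  rw [← neg_sub zt zs, inner_neg_right] at htangent_t
  have hlam_le : lam * f zt ≤ lam * ⟪Gt, zt - zs⟫ :=
    mul_le_mul_of_nonneg_left (by linarith) hlam
  have hlams_le : lams * ⟪Gs, zt - zs⟫ ≤ lams * f zt := by
    nlinarith [mul_le_mul_of_nonneg_left htangent_s hlams]
  rw [real_inner_smul_left, real_inner_smul_left]
  linarith [sub_mul_eta_le (lam := lam) (c := f zt) hlams]

theorem sub_mul_affine_eq_inner {a zs zt : E} {c nu nus : ℝ} (hzs : ⟪a, zs⟫ + c = 0) :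
    (nu - nus) * (⟪a, zt⟫ + c) = ⟪nu • a, zt - zs⟫ - ⟪nus • a, zt - zs⟫ := by
  rw [real_inner_smul_left, real_inner_smul_left, inner_sub_right,
    eq_neg_of_add_eq_zero_right hzs]
  ring

end KKT

/-- Passivity of the dual ascent subsystem (differential inequality form): with
`U = (1/2)(‖λ-λ*‖² + ‖ν-ν*‖²)`, `λ̇ⱼ = η(λⱼ, gⱼ(z̃))` and `ν̇ = h(z̃)`, `g` componentwise
convex differentiable, `h` affine, `λ ≥ 0`, and `(z*,λ*,ν*)` a KKT point,
`dU/dt = Σⱼ(λⱼ-λ*ⱼ)η(λⱼ,gⱼ(z̃)) + Σₗ(νₗ-ν*ₗ)hₗ(z̃)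
  ≤ (∇g(z̃)ᵀλ - ∇g(z*)ᵀλ* + ∇h(z̃)ᵀν - ∇h(z*)ᵀν*)ᵀ(z̃-z*)`. -/
theorem stmt_11 (N m p : ℕ)
    (g : EuclideanSpace ℝ (Fin N) → Fin m → ℝ)
    (G : EuclideanSpace ℝ (Fin N) → Fin m → EuclideanSpace ℝ (Fin N))
    (hgconv : ∀ j, ConvexOn ℝ Set.univ fun z => g z j)
    (hgdiff : ∀ j z, HasGradientAt (fun z => g z j) (G z j) z)
    (a : Fin p → EuclideanSpace ℝ (Fin N)) (cst : Fin p → ℝ)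
    (h : EuclideanSpace ℝ (Fin N) → Fin p → ℝ)
    (haff : ∀ z l, h z l = ⟪a l, z⟫ + cst l)
    (zs zt : EuclideanSpace ℝ (Fin N))
    (lam lams : Fin m → ℝ) (nu nus : Fin p → ℝ)
    (hlam : ∀ j, 0 ≤ lam j) (hlams : ∀ j, 0 ≤ lams j)
    (hfeas : ∀ j, g zs j ≤ 0) (heq : ∀ l, h zs l = 0)
    (hslack : ∀ j, lams j * g zs j = 0) :
    (∑ j, (lam j - lams j) * eta (lam j) (g zt j)) +
        (∑ l, (nu l - nus l) * h zt l) ≤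
      ⟪(∑ j, lam j • G zt j) - (∑ j, lams j • G zs j) +
          ((∑ l, nu l • a l) - (∑ l, nus l • a l)), zt - zs⟫ := by
  calc (∑ j, (lam j - lams j) * eta (lam j) (g zt j)) + (∑ l, (nu l - nus l) * h zt l)
      ≤ (∑ j, (⟪lam j • G zt j, zt - zs⟫ - ⟪lams j • G zs j, zt - zs⟫)) +
          (∑ l, (⟪nu l • a l, zt - zs⟫ - ⟪nus l • a l, zt - zs⟫)) := by
        gcongr with j _ l _
        · exact sub_mul_eta_le_inner_gradient (hgconv j) trivial trivial (hgdiff j zs)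
            (hgdiff j zt) (hlam j) (hlams j) (hfeas j) (hslack j)
        · rw [haff]
          exact (sub_mul_affine_eq_inner ((haff zs l).symm.trans (heq l))).le
    _ = _ := by
        simp only [inner_add_left, inner_sub_left, sum_inner, Finset.sum_sub_distrib]
end

section
/- The gradient descent/PI-consensus subsystem is passive: for the system ż̃ = -Lz̃ + Lζ - αφ(z̃) + u, ζ̇ = -Lz̃, with L symmetric positive semidefinite, α ≥ 0, and φ = ∇f the gradient of a convex function f, the storage function S(z̃,ζ) = (1/2)‖z̃ - z̃*‖² + (1/2)‖ζ - ζ*‖² satisfies Ṡ ≤ (u - u*)ᵀ(z̃ - z̃*), where (z̃*, ζ*) is an equilibrium for constant input u* (i.e., -Lz̃* + Lζ* - αφ(z̃*) + u* = 0 and Lz̃* = 0). -/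
open scoped RealInnerProductSpace

/-!
In the shifted coordinates `e = z - z*`, `η = ζ - ζ*` the equilibrium relations turn the vector
field into `(-L e + L η - α (φ z - φ z*) + (u - u*), -L e)`. By symmetry of `L` the cross terms
`⟪e, L η⟫` and `⟪η, -L e⟫` cancel, leaving `⟪u - u*, e⟫ - ⟪e, L e⟫ - α ⟪e, φ z - φ z*⟫`; the last
two terms are nonpositive since `L` is positive semidefinite and the gradient of a convex function
is monotone.
-/

theorem ConvexOn.fderiv_sub_le {E : Type*} [NormedAddCommGroup E] [NormedSpace ℝ E]
    {s : Set E} {f : E → ℝ} {f' : E →L[ℝ] ℝ} {x y : E} (hf : ConvexOn ℝ s f)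
    (hx : x ∈ s) (hy : y ∈ s) (hfx : HasFDerivAt f f' x) :
    f' (y - x) ≤ f y - f x := by
  let ℓ : ℝ →ᵃ[ℝ] E := AffineMap.lineMap x y
  have hℓ : HasDerivAt (f ∘ ℓ) (f' (y - x)) 0 :=
    (by simpa [ℓ] using hfx : HasFDerivAt f f' (ℓ 0)).comp_hasDerivAt 0 AffineMap.hasDerivAt_lineMap
  simpa [slope, ℓ] using (hf.comp_affineMap ℓ).le_slope_of_hasDerivAt
    (by simpa [ℓ]) (by simpa [ℓ]) one_pos hℓ

section InnerProductSpace

variable {F : Type*} [NormedAddCommGroup F] [InnerProductSpace ℝ F]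

theorem ConvexOn.inner_gradient_sub_le [CompleteSpace F] {s : Set F} {f : F → ℝ} {g x y : F}
    (hf : ConvexOn ℝ s f) (hx : x ∈ s) (hy : y ∈ s) (hfx : HasGradientAt f g x) :
    ⟪g, y - x⟫ ≤ f y - f x := by
  simpa using hf.fderiv_sub_le hx hy hfx.hasFDerivAt

theorem ConvexOn.inner_sub_gradient_nonneg [CompleteSpace F] {s : Set F} {f : F → ℝ}
    {g h x y : F} (hf : ConvexOn ℝ s f) (hx : x ∈ s) (hy : y ∈ s) (hfx : HasGradientAt f g x)
    (hfy : HasGradientAt f h y) :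
    0 ≤ ⟪y - x, h - g⟫ := by
  have hxy := hf.inner_gradient_sub_le hx hy hfx
  have hyx := hf.inner_gradient_sub_le hy hx hfy
  rw [← neg_sub y x, inner_neg_right] at hyx
  rw [inner_sub_right, real_inner_comm, real_inner_comm g]
  linarith

theorem LinearMap.IsSymmetric.inner_neg_add_add_inner_neg {T : F →ₗ[ℝ] F} (hT : T.IsSymmetric)
    (x y : F) :
    ⟪x, -T x + T y⟫ + ⟪y, -T x⟫ = -⟪x, T x⟫ := by
  rw [inner_add_right, inner_neg_right, inner_neg_right, ← hT y x, real_inner_comm (T y)]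
  ring

end InnerProductSpace

/-- Passivity of the gradient descent / PI-consensus subsystem: for
`ż = -Lz + Lζ - αφ(z) + u`, `ζ̇ = -Lz`, with `L` symmetric PSD (as the self-adjoint
PSD operator `T`), `α ≥ 0`, `φ = ∇f` for a convex `f`, and `(z*,ζ*)` an equilibrium
for the constant input `u*`, the storage `S = (1/2)‖z-z*‖² + (1/2)‖ζ-ζ*‖²` satisfies
`Ṡ = ⟪z-z*, ż⟫ + ⟪ζ-ζ*, ζ̇⟫ ≤ ⟪u-u*, z-z*⟫`. -/
theorem stmt_12 (M : ℕ)
    (T : EuclideanSpace ℝ (Fin M) →ₗ[ℝ] EuclideanSpace ℝ (Fin M))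
    (hsym : ∀ x y, ⟪T x, y⟫ = ⟪x, T y⟫)
    (hpsd : ∀ x, 0 ≤ ⟪x, T x⟫)
    (α : ℝ) (hα : 0 ≤ α)
    (f : EuclideanSpace ℝ (Fin M) → ℝ) (hconv : ConvexOn ℝ Set.univ f)
    (φ : EuclideanSpace ℝ (Fin M) → EuclideanSpace ℝ (Fin M))
    (hgrad : ∀ x, HasGradientAt f (φ x) x)
    (zs ζs us : EuclideanSpace ℝ (Fin M))
    (heq : -T zs + T ζs - α • φ zs + us = 0) (heq2 : T zs = 0) :
    ∀ z ζ u : EuclideanSpace ℝ (Fin M),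
      ⟪z - zs, -T z + T ζ - α • φ z + u⟫ + ⟪ζ - ζs, -(T z)⟫ ≤ ⟪u - us, z - zs⟫ := by
  intro z ζ u
  have hTz : T z = T (z - zs) := by rw [map_sub, heq2, sub_zero]
  have hflow : -T z + T ζ - α • φ z + u
      = (-T (z - zs) + T (ζ - ζs)) - α • (φ z - φ zs) + (u - us) := by
    rw [map_sub T z, map_sub T ζ]
    linear_combination (norm := module) heq
  have hmono : 0 ≤ ⟪z - zs, φ z - φ zs⟫ :=
    hconv.inner_sub_gradient_nonneg trivial trivial (hgrad zs) (hgrad z)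
  calc ⟪z - zs, -T z + T ζ - α • φ z + u⟫ + ⟪ζ - ζs, -(T z)⟫
      = -⟪z - zs, T (z - zs)⟫ - α * ⟪z - zs, φ z - φ zs⟫ + ⟪u - us, z - zs⟫ := by
        rw [hflow, hTz, inner_add_right, inner_sub_right, real_inner_smul_right,
          real_inner_comm (u - us)]
        linarith [LinearMap.IsSymmetric.inner_neg_add_add_inner_neg hsym (z - zs) (ζ - ζs)]
    _ ≤ ⟪u - us, z - zs⟫ := by linarith [hpsd (z - zs), mul_nonneg hα hmono]
end

section
/- For the shifted closed-loop system d/dt(q_m, ξ) = (-(L̄ + α D̄)q_m + L̄ξ, -L̄q_m) with L̄ the Laplacian of a connected graph (tensored with I₂), D̄ the leader-selection diagonal matrix with at least one leader, and α > 0, the only trajectory along which V(q_m,ξ) = (1/2)‖q_m‖² + (1/2)‖ξ‖² is constant and contained in {(q_m,ξ) : V̇ = 0} with invariance satisfies q_m = 0; consequently q_m(t) → 0, i.e., all robot positions converge to the (biased) reference. -/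
/-!
For `V = (‖q‖² + ‖ξ‖²) / 2` the coupling terms `⟪q, L̄ξ⟫` and `⟪ξ, -L̄q⟫` cancel because `L̄` is
symmetric, so `V̇ = -⟪(L̄ + αD̄) q, q⟫ ≤ -c ‖q‖²` with `c > 0`: the matrix `(L + αD) ⊗ I₂` is
positive definite, since a vector killed by the Laplacian of a connected graph is constant and
the leader term then forces it to vanish. Hence `V` stays bounded, `d/dt ‖q‖²` is bounded above,
and a Barbalat-type argument turns the dissipation of `V` into `‖q‖ → 0`.
-/

open Matrix Filter Set Topology
open scoped Kronecker RealInnerProductSpace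

lemma image_sub_le_mul_sub_of_hasDerivAt_le {f f' : ℝ → ℝ} {a b C : ℝ}
    (hf : ∀ x, HasDerivAt f (f' x) x) (hle : ∀ x ∈ Ioo a b, f' x ≤ C) (hab : a ≤ b) :
    f b - f a ≤ C * (b - a) := by
  refine (convex_Icc a b).image_sub_le_mul_sub_of_deriv_le
    (fun x _ => (hf x).continuousAt.continuousWithinAt)
    (fun x _ => (hf x).differentiableAt.differentiableWithinAt) (fun x hx => ?_)
    a (left_mem_Icc.2 hab) b (right_mem_Icc.2 hab) hab
  rw [interior_Icc] at hx
  exact (hf x).deriv ▸ hle x hx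

/- If `g t ≥ ε` late enough, then `g ≥ ε / 2` on a window `[t - d, t]` of fixed length, so `V`
drops there by a fixed amount; this is impossible once `V` has nearly converged. -/
theorem tendsto_zero_of_hasDerivAt_le_neg_mul {V V' g g' : ℝ → ℝ} {c K : ℝ} (hc : 0 < c)
    (hV : ∀ t, HasDerivAt V (V' t) t) (hVbdd : BddBelow (range V))
    (hV' : ∀ t, V' t ≤ -c * g t) (hg : ∀ t, HasDerivAt g (g' t) t) (hg0 : ∀ t, 0 ≤ g t)
    (hg' : ∀ᶠ t in atTop, g' t ≤ K) :
    Tendsto g atTop (𝓝 0) := by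
  have hanti : Antitone V :=
    antitone_of_hasDerivAt_nonpos hV fun t =>
      (hV' t).trans (mul_nonpos_of_nonpos_of_nonneg (neg_nonpos.2 hc.le) (hg0 t))
  obtain ⟨T, hT⟩ := eventually_atTop.1 hg'
  set K' := max K 1
  have hK' : 0 < K' := lt_max_of_lt_right one_pos
  refine tendsto_order.2 ⟨fun a ha => .of_forall fun t => ha.trans_le (hg0 t), fun ε hε => ?_⟩
  set d := ε / (2 * K') with hd_def
  have hd : 0 < d := by positivity
  have hVd : Tendsto (fun t => V (t - d) - V t) atTop (𝓝 0) := by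
    have hlim := tendsto_atTop_ciInf hanti hVbdd
    simpa [← sub_eq_add_neg] using
      (hlim.comp (tendsto_atTop_add_const_right _ (-d) tendsto_id)).sub hlim
  filter_upwards [hVd.eventually (gt_mem_nhds (by positivity : 0 < c * (ε / 2) * d)),
    eventually_ge_atTop (T + d)] with t hdrop ht
  by_contra! hgt
  have hwindow : ∀ s ∈ Icc (t - d) t, ε / 2 ≤ g s := by
    intro s hs
    have hgrowth := image_sub_le_mul_sub_of_hasDerivAt_le hg
      (fun x hx => (hT x (by linarith [hx.1, hs.1])).trans (le_max_left K 1)) hs.2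
    have hKd : K' * d = ε / 2 := by rw [hd_def]; field_simp
    nlinarith [hs.1, hs.2]
  have hdecay := image_sub_le_mul_sub_of_hasDerivAt_le hV (C := -c * (ε / 2))
    (fun x hx => (hV' x).trans (by nlinarith [hwindow x (Ioo_subset_Icc_self hx)]))
    (by linarith : t - d ≤ t)
  nlinarith

section InnerProductSpace

variable {E : Type*} [NormedAddCommGroup E] [InnerProductSpace ℝ E]

theorem tendsto_zero_of_hasDerivAt_of_coercive {M : E → E} {L : E →L[ℝ] E}
    (hL : (L : E →ₗ[ℝ] E).IsSymmetric) {c : ℝ} (hc : 0 < c) (hM : ∀ x, c * ‖x‖ ^ 2 ≤ ⟪M x, x⟫)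
    {q ξ : ℝ → E} (hq : ∀ t, HasDerivAt q (-M (q t) + L (ξ t)) t)
    (hξ : ∀ t, HasDerivAt ξ (-L (q t)) t) :
    Tendsto q atTop (𝓝 0) := by
  set V : ℝ → ℝ := fun t => (‖q t‖ ^ 2 + ‖ξ t‖ ^ 2) / 2
  have hV : ∀ t, HasDerivAt V (-⟪M (q t), q t⟫) t := by
    intro t
    refine (((hq t).norm_sq.fun_add (hξ t).norm_sq).div_const 2).congr_deriv ?_
    have := hL (ξ t) (q t)
    simp only [ContinuousLinearMap.coe_coe] at this
    rw [inner_add_right, inner_neg_right, inner_neg_right, ← this, real_inner_comm (q t) (M (q t)),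
      real_inner_comm (q t) (L (ξ t))]
    ring
  have hV' : ∀ t, -⟪M (q t), q t⟫ ≤ -c * ‖q t‖ ^ 2 := fun t => by linarith [hM (q t)]
  have hanti : Antitone V := antitone_of_hasDerivAt_nonpos hV fun t =>
    (hV' t).trans (mul_nonpos_of_nonpos_of_nonneg (neg_nonpos.2 hc.le) (sq_nonneg _))
  have hg : ∀ t, HasDerivAt (fun t => ‖q t‖ ^ 2) (2 * ⟪q t, -M (q t) + L (ξ t)⟫) t :=
    fun t => (hq t).norm_sq
  have hg' : ∀ t, 0 ≤ t → 2 * ⟪q t, -M (q t) + L (ξ t)⟫ ≤ 2 * ‖L‖ * V 0 := by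
    intro t ht
    have hamgm : ‖q t‖ * ‖ξ t‖ ≤ V t := by simp only [V]; nlinarith [sq_nonneg (‖q t‖ - ‖ξ t‖)]
    calc 2 * ⟪q t, -M (q t) + L (ξ t)⟫ = -2 * ⟪M (q t), q t⟫ + 2 * ⟪q t, L (ξ t)⟫ := by
          rw [inner_add_right, inner_neg_right, real_inner_comm]; ring
      _ ≤ 2 * (‖q t‖ * (‖L‖ * ‖ξ t‖)) := by
          linarith [hM (q t), mul_nonneg hc.le (sq_nonneg ‖q t‖),
            real_inner_le_norm (q t) (L (ξ t)), mul_le_mul_of_nonneg_left (L.le_opNorm (ξ t)) (norm_nonneg (q t))]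
      _ ≤ 2 * ‖L‖ * V 0 := by
          linarith [mul_le_mul_of_nonneg_left (hamgm.trans (hanti ht)) (norm_nonneg L)]
  have hsq := tendsto_zero_of_hasDerivAt_le_neg_mul hc hV
    ⟨0, by rintro _ ⟨t, rfl⟩; positivity⟩ hV' hg (fun t => sq_nonneg _)
    (eventually_atTop.2 ⟨0, hg'⟩)
  rw [tendsto_zero_iff_norm_tendsto_zero]
  simpa [Real.sqrt_sq (norm_nonneg _)] using hsq.sqrt

theorem exists_pos_mul_sq_norm_le_inner_self [FiniteDimensional ℝ E] (T : E →L[ℝ] E)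
    (hT : ∀ x ≠ 0, 0 < ⟪T x, x⟫) : ∃ c > 0, ∀ x, c * ‖x‖ ^ 2 ≤ ⟪T x, x⟫ := by
  rcases subsingleton_or_nontrivial E with hE | hE
  · exact ⟨1, one_pos, fun x => by simp [Subsingleton.elim x 0]⟩
  obtain ⟨x₀, hx₀, hmin⟩ := (isCompact_sphere (0 : E) 1).exists_isMinOn
    (NormedSpace.sphere_nonempty.2 zero_le_one)
    (by fun_prop : Continuous fun x => ⟪T x, x⟫).continuousOn
  refine ⟨⟪T x₀, x₀⟫, hT x₀ (ne_zero_of_mem_unit_sphere ⟨x₀, hx₀⟩), fun x => ?_⟩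
  rcases eq_or_ne x 0 with rfl | hx
  · simp
  have hu : ‖x‖⁻¹ • x ∈ Metric.sphere (0 : E) 1 := by
    simp [norm_smul, inv_mul_cancel₀ (norm_ne_zero_iff.2 hx)]
  have hmin_x : ⟪T x₀, x₀⟫ ≤ ‖x‖⁻¹ * (‖x‖⁻¹ * ⟪T x, x⟫) := by
    simpa only [map_smul, real_inner_smul_left, real_inner_smul_right] using
      isMinOn_iff.1 hmin _ hu
  calc ⟪T x₀, x₀⟫ * ‖x‖ ^ 2 ≤ ‖x‖⁻¹ * (‖x‖⁻¹ * ⟪T x, x⟫) * ‖x‖ ^ 2 := by gcongr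
    _ = ⟪T x, x⟫ := by field_simp

theorem Matrix.PosDef.exists_pos_mul_sq_norm_le_inner {n : Type*} [Fintype n] [DecidableEq n]
    {A : Matrix n n ℝ} (hA : A.PosDef) :
    ∃ c > 0, ∀ x, c * ‖x‖ ^ 2 ≤ ⟪toEuclideanCLM (𝕜 := ℝ) A x, x⟫ := by
  refine exists_pos_mul_sq_norm_le_inner_self _ fun x hx => ?_
  rw [real_inner_comm, inner_toEuclideanCLM]
  simpa using hA.dotProduct_mulVec_pos (x := WithLp.ofLp x) (by simpa using hx)

end InnerProductSpace

theorem SimpleGraph.posDef_lapMatrix_add_smul_diagonal {V : Type*} [Fintype V] [DecidableEq V]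
    {G : SimpleGraph V} [DecidableRel G.Adj] (hG : G.Connected) {δ : V → ℝ} (hδ : 0 ≤ δ)
    (hleader : ∃ i, δ i ≠ 0) {α : ℝ} (hα : 0 < α) :
    (G.lapMatrix ℝ + α • diagonal δ).PosDef := by
  have hL := G.posSemidef_lapMatrix ℝ
  have hD := PosSemidef.diagonal hδ
  refine PosDef.of_dotProduct_mulVec_pos (hL.add (hD.smul hα.le)).isHermitian fun x hx => ?_
  rw [add_mulVec, smul_mulVec, dotProduct_add, dotProduct_smul, smul_eq_mul]
  have hLx := hL.dotProduct_mulVec_nonneg x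
  have hDx := hD.dotProduct_mulVec_nonneg x
  by_contra! hle
  have hLx0 : G.lapMatrix ℝ *ᵥ x = 0 := (hL.dotProduct_mulVec_zero_iff x).1 (by nlinarith)
  have hDx0 : diagonal δ *ᵥ x = 0 := (hD.dotProduct_mulVec_zero_iff x).1 (by nlinarith)
  obtain ⟨i, hi⟩ := hleader
  have hconst := (G.lapMatrix_mulVec_eq_zero_iff_forall_reachable).1 hLx0
  have hxi : x i = 0 := by simpa [mulVec_diagonal, hi] using congrFun hDx0 i
  exact hx (funext fun j => (hconst j i (hG.preconnected j i)).trans hxi)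

/-- Convergence of the shifted closed-loop system: for
`d/dt (q_m, ξ) = (-(L̄ + αD̄)q_m + L̄ξ, -L̄q_m)` with `L̄ = L ⊗ I₂` the Laplacian of a
connected graph tensored with `I₂`, `D̄ = D ⊗ I₂` the leader-selection diagonal matrix
(`δᵢ ∈ {0,1}` with at least one leader) and `α > 0`, every trajectory satisfies
`q_m(t) → 0`, i.e. all robot positions converge to the (biased) reference. -/
theorem stmt_19 (n : ℕ) (G : SimpleGraph (Fin n)) [DecidableRel G.Adj]
    (hG : G.Connected) (δ : Fin n → ℝ) (hδ : ∀ i, δ i = 0 ∨ δ i = 1)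
    (hleader : ∃ i, δ i = 1) (α : ℝ) (hα : 0 < α)
    (q ξ : ℝ → (Fin n × Fin 2 → ℝ))
    (hq : ∀ t, HasDerivAt q
      (-(((G.lapMatrix ℝ ⊗ₖ (1 : Matrix (Fin 2) (Fin 2) ℝ)) +
            α • (Matrix.diagonal δ ⊗ₖ (1 : Matrix (Fin 2) (Fin 2) ℝ))) *ᵥ q t) +
        (G.lapMatrix ℝ ⊗ₖ (1 : Matrix (Fin 2) (Fin 2) ℝ)) *ᵥ ξ t) t)
    (hξ : ∀ t, HasDerivAt ξ
      (-((G.lapMatrix ℝ ⊗ₖ (1 : Matrix (Fin 2) (Fin 2) ℝ)) *ᵥ q t)) t) :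
    Tendsto q atTop (nhds 0) := by
  set L := G.lapMatrix ℝ ⊗ₖ (1 : Matrix (Fin 2) (Fin 2) ℝ)
  set M := L + α • (Matrix.diagonal δ ⊗ₖ (1 : Matrix (Fin 2) (Fin 2) ℝ))
  have hM : M.PosDef := by
    simp only [M, L]
    rw [← smul_kronecker, ← add_kronecker]
    refine PosDef.kronecker ?_ PosDef.one
    refine G.posDef_lapMatrix_add_smul_diagonal hG (fun i => ?_) ?_ hα
    · rcases hδ i with h | h <;> simp [h]
    · obtain ⟨i, hi⟩ := hleader
      exact ⟨i, by simp [hi]⟩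
  obtain ⟨c, hc, hcoer⟩ := hM.exists_pos_mul_sq_norm_le_inner
  have hL : (toEuclideanLin L).IsSymmetric := isSymmetric_toEuclideanLin_iff.2
    ((G.posSemidef_lapMatrix ℝ).kronecker PosSemidef.one).isHermitian
  set e := EuclideanSpace.equiv (Fin n × Fin 2) ℝ
  -- `e.symm` is `WithLp.toLp 2`, through which `toEuclideanCLM A` acts as `A *ᵥ ·` definitionally.
  have hlim := tendsto_zero_of_hasDerivAt_of_coercive (L := toEuclideanCLM (𝕜 := ℝ) L) hL hc hcoer
    (q := fun t => e.symm (q t)) (ξ := fun t => e.symm (ξ t))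
    (fun t => e.symm.hasFDerivAt.comp_hasDerivAt t (hq t))
    (fun t => e.symm.hasFDerivAt.comp_hasDerivAt t (hξ t))
  simpa [Function.comp_def] using (e.continuous.tendsto 0).comp hlim
end
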